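/- A density matrix ρ on H_A⊗H_B is entangled (not separable) if and only if there exists a Hermitian operator H (an entanglement witness) with Tr(Hρ) < 0 and Tr(Hσ) ≥ 0 for all separable density matrices σ. -/

import Mathlib

open Matrix Kronecker
open scoped ComplexOrder

attribute [local instance] Matrix.normedAddCommGroup Matrix.normedSpace

open Module in
/-- The convex hull of a compact set in a finite-dimensional real normed space is compact. -/
theorem isCompact_convexHull_of_isCompact' {E : Type*} [NormedAddCommGroup E] [NormedSpace ℝ E]
    [FiniteDimensional ℝ E] {s : Set E} (hs : IsCompact s) :
    IsCompact (convexHull ℝ s) := by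
  rcases s.eq_empty_or_nonempty with rfl | ⟨z₀, hz₀⟩
  · simp
  set n := finrank ℝ E + 1 with hn
  have h0 : IsCompact ((stdSimplex ℝ (Fin n)) ×ˢ (Set.univ.pi fun _ : Fin n => s)) :=
    (isCompact_stdSimplex _ _).prod (isCompact_univ_pi fun _ => hs)
  have hcont : Continuous fun q : (Fin n → ℝ) × (Fin n → E) => ∑ i, q.1 i • q.2 i :=
    continuous_finset_sum _ fun i _ =>
      (((continuous_apply i).comp continuous_fst).smul ((continuous_apply i).comp continuous_snd))
  have himg := h0.image hcont
  have hset : convexHull ℝ s =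
      (fun q : (Fin n → ℝ) × (Fin n → E) => ∑ i, q.1 i • q.2 i) ''
        ((stdSimplex ℝ (Fin n)) ×ˢ (Set.univ.pi fun _ : Fin n => s)) := by
    apply Set.Subset.antisymm
    · intro x hx
      obtain ⟨ι, hι, z, w, hrz, hai, hw0, hw1, hx⟩ := eq_pos_convex_span_of_mem_convexHull hx
      letI := hι
      have hw1' : ∑ i, w i = 1 := hw1
      have hx' : ∑ i, w i • z i = x := hx
      have hcard : Fintype.card ι ≤ n := by
        refine le_trans hai.card_le_finrank_succ ?_
        have := Submodule.finrank_le (vectorSpan ℝ (Set.range z))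
        omega
      obtain ⟨emb⟩ : Nonempty (ι ↪ Fin n) :=
        Function.Embedding.nonempty_of_card_le (by simpa using hcard)
      have hinj := emb.injective
      set w' : Fin n → ℝ := Function.extend emb w 0 with hw'
      set z' : Fin n → E := Function.extend emb z (fun _ => z₀) with hz'
      have hw'app : ∀ i, w' (emb i) = w i := fun i => hinj.extend_apply _ _ _
      have hz'app : ∀ i, z' (emb i) = z i := fun i => hinj.extend_apply _ _ _
      have hw'0 : ∀ j, (¬∃ i, emb i = j) → w' j = 0 := fun j h => by
        rw [hw', Function.extend_apply' _ _ _ h]; rfl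
      have hz'0 : ∀ j, (¬∃ i, emb i = j) → z' j = z₀ := fun j h => by
        rw [hz', Function.extend_apply' _ _ _ h]
      have hnotmem : ∀ j ∈ Finset.univ, j ∉ Finset.univ.image emb → ¬∃ i, emb i = j := by
        intro j _ hj
        simpa [Finset.mem_image] using hj
      have hwsum : ∑ j : Fin n, w' j = 1 := by
        rw [← Finset.sum_subset (Finset.subset_univ (Finset.univ.image emb))
          (fun j h1 h2 => hw'0 j (hnotmem j h1 h2)),
          Finset.sum_image (fun a _ b _ h => hinj h)]
        simpa [hw'app] using hw1'
      have hvsum : ∑ j : Fin n, w' j • z' j = x := by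
        rw [← Finset.sum_subset (Finset.subset_univ (Finset.univ.image emb))
          (fun j h1 h2 => by rw [hw'0 j (hnotmem j h1 h2), zero_smul]),
          Finset.sum_image (fun a _ b _ h => hinj h)]
        rw [← hx']
        exact Finset.sum_congr rfl fun i _ => by rw [hw'app, hz'app]
      have hw'nonneg : ∀ j, 0 ≤ w' j := by
        intro j
        rcases Classical.em (∃ i, emb i = j) with ⟨i, rfl⟩ | h
        · rw [hw'app]; exact (hw0 i).le
        · rw [hw'0 j h]
      have hz'mem : ∀ j, z' j ∈ s := by
        intro j
        rcases Classical.em (∃ i, emb i = j) with ⟨i, rfl⟩ | h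
        · rw [hz'app]; exact hrz ⟨i, rfl⟩
        · rw [hz'0 j h]; exact hz₀
      exact ⟨(w', z'), ⟨⟨fun j => hw'nonneg j, hwsum⟩, fun j _ => hz'mem j⟩, hvsum⟩
    · rintro _ ⟨⟨w, z⟩, ⟨hw, hz⟩, rfl⟩
      exact mem_convexHull_of_exists_fintype w z hw.1 hw.2 (fun i => hz i trivial) rfl
  rw [hset]; exact himg

/-- The set of pure product states. -/
def ProdStates (nA nB : Type*) [Fintype nA] [Fintype nB] :
    Set (Matrix (nA × nB) (nA × nB) ℂ) :=
  {m | ∃ (a : nA → ℂ) (b : nB → ℂ), (∑ x, ‖a x‖ ^ 2 = 1) ∧ (∑ x, ‖b x‖ ^ 2 = 1) ∧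
    m = vecMulVec a (star a) ⊗ₖ vecMulVec b (star b)}

theorem isCompact_sphereSet (n : Type*) [Fintype n] :
    IsCompact {a : n → ℂ | ∑ x, ‖a x‖ ^ 2 = 1} := by
  rw [Metric.isCompact_iff_isClosed_bounded]
  constructor
  · exact isClosed_eq (continuous_finset_sum _ fun x _ => ((continuous_apply x).norm.pow 2))
      continuous_const
  · refine Metric.isBounded_closedBall (x := 0) (r := 1) |>.subset fun a ha => ?_
    rw [Metric.mem_closedBall, dist_zero_right]
    refine (pi_norm_le_iff_of_nonneg zero_le_one).2 fun x => ?_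
    have h1 : ‖a x‖ ^ 2 ≤ 1 := by
      rw [← ha]
      exact Finset.single_le_sum (fun y _ => sq_nonneg ‖a y‖) (Finset.mem_univ x)
    exact (pow_le_one_iff_of_nonneg (norm_nonneg _) two_ne_zero).1 h1

theorem isCompact_prodStates {nA nB : Type*} [Fintype nA] [Fintype nB] :
    IsCompact (ProdStates nA nB) := by
  have h := ((isCompact_sphereSet nA).prod (isCompact_sphereSet nB)).image
    (f := fun q : (nA → ℂ) × (nB → ℂ) =>
      vecMulVec q.1 (star q.1) ⊗ₖ vecMulVec q.2 (star q.2)) ?_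
  · convert h using 1
    ext m
    constructor
    · rintro ⟨a, b, ha, hb, rfl⟩
      exact ⟨(a, b), ⟨ha, hb⟩, rfl⟩
    · rintro ⟨⟨a, b⟩, ⟨ha, hb⟩, rfl⟩
      exact ⟨a, b, ha, hb, rfl⟩
  · apply continuous_matrix
    rintro ⟨i, j⟩ ⟨k, l⟩
    simp only [kroneckerMap_apply, vecMulVec_apply, Pi.star_apply]
    fun_prop

/-- A state on `H_A ⊗ H_B` is separable if it is a convex combination of projectors onto
product unit vectors. -/
def SepState {nA nB : Type*} [Fintype nA] [Fintype nB]
    (ρ : Matrix (nA × nB) (nA × nB) ℂ) : Prop :=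
  ∃ (k : ℕ) (p : Fin k → ℝ) (a : Fin k → nA → ℂ) (b : Fin k → nB → ℂ),
    (∀ i, 0 ≤ p i) ∧ (∑ i, p i = 1) ∧
    (∀ i, ∑ x, ‖a i x‖ ^ 2 = 1) ∧ (∀ i, ∑ x, ‖b i x‖ ^ 2 = 1) ∧
    ρ = ∑ i, (p i : ℂ) •
      (vecMulVec (a i) (star (a i)) ⊗ₖ vecMulVec (b i) (star (b i)))

theorem sepState_iff_mem_convexHull {nA nB : Type*} [Fintype nA] [Fintype nB]
    {σ : Matrix (nA × nB) (nA × nB) ℂ} :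
    SepState σ ↔ σ ∈ convexHull ℝ (ProdStates nA nB) := by
  constructor
  · rintro ⟨k, p, a, b, hp, hsum, ha, hb, rfl⟩
    refine mem_convexHull_of_exists_fintype p
      (fun i => vecMulVec (a i) (star (a i)) ⊗ₖ vecMulVec (b i) (star (b i)))
      hp hsum (fun i => ⟨a i, b i, ha i, hb i, rfl⟩) ?_
    exact Finset.sum_congr rfl fun i _ => by rw [← algebraMap_smul ℂ (p i)]; rfl
  · intro h
    rw [mem_convexHull_iff_exists_fintype] at h
    obtain ⟨ι, hι, w, z, hw0, hw1, hz, hx⟩ := h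
    letI := hι
    have hw1' : ∑ i, w i = 1 := hw1
    have hx' : ∑ i, w i • z i = σ := hx
    set e := (Fintype.equivFin ι).symm with he
    refine ⟨Fintype.card ι, fun j => w (e j), fun j => (hz (e j)).choose,
      fun j => (hz (e j)).choose_spec.choose, fun j => hw0 (e j), ?_,
      fun j => (hz (e j)).choose_spec.choose_spec.1,
      fun j => (hz (e j)).choose_spec.choose_spec.2.1, ?_⟩
    · rw [Equiv.sum_comp e w, hw1']
    · rw [← hx', ← Equiv.sum_comp e (fun i => w i • z i)]
      refine Finset.sum_congr rfl fun j _ => ?_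
      rw [← (hz (e j)).choose_spec.choose_spec.2.2, ← algebraMap_smul ℂ (w (e j)) (z (e j))]
      rfl

theorem matrix_decomp {n : Type*} [Fintype n] [DecidableEq n] (X : Matrix n n ℂ) :
    X = ∑ j, ∑ k, ((X j k).re • Matrix.single j k (1 : ℂ) +
      (X j k).im • (Complex.I • Matrix.single j k 1)) := by
  ext p q
  simp only [Matrix.sum_apply, Matrix.add_apply, Matrix.smul_apply, Matrix.single,
    Matrix.of_apply, smul_eq_mul, Complex.real_smul, mul_ite, mul_one, mul_zero,
    Complex.ofReal_zero]
  simp only [ite_and, Finset.sum_add_distrib, Finset.sum_ite_irrel, Finset.sum_ite_eq,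
    Finset.sum_ite_eq', Finset.sum_const_zero, Finset.mem_univ, if_true]
  rw [Complex.re_add_im]

theorem exists_repr_matrix {n : Type*} [Fintype n] [DecidableEq n]
    (f : Matrix n n ℂ →L[ℝ] ℝ) :
    ∃ B : Matrix n n ℂ, ∀ X : Matrix n n ℂ, ((B * X).trace).re = f X := by
  refine ⟨Matrix.of fun k j => ((f (Matrix.single j k 1) : ℝ) : ℂ) -
      Complex.I * ((f (Complex.I • Matrix.single j k 1) : ℝ) : ℂ), fun X => ?_⟩
  have hL : (((Matrix.of fun k j => ((f (Matrix.single j k 1) : ℝ) : ℂ) -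
      Complex.I * ((f (Complex.I • Matrix.single j k 1) : ℝ) : ℂ)) * X).trace).re =
      ∑ p, ∑ k, (f (Matrix.single k p 1) * (X k p).re
        + f (Complex.I • Matrix.single k p 1) * (X k p).im) := by
    simp only [Matrix.trace, Matrix.diag, Matrix.mul_apply, Matrix.of_apply, Complex.re_sum,
      Complex.mul_re, Complex.sub_re, Complex.ofReal_re, Complex.mul_im, Complex.sub_im,
      Complex.I_re, Complex.I_im, Complex.ofReal_im]
    refine Finset.sum_congr rfl fun p _ => Finset.sum_congr rfl fun k _ => by ring
  rw [hL]
  conv_rhs => rw [matrix_decomp X]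
  rw [map_sum]
  simp only [map_sum, map_add, _root_.map_smul, smul_eq_mul]
  rw [Finset.sum_comm]
  exact Finset.sum_congr rfl fun k _ => Finset.sum_congr rfl fun p _ => by ring

/-- A density matrix is entangled iff there is an entanglement witness for it: a Hermitian
operator with negative expectation on it and nonnegative expectation on all separable states. -/
theorem stmt2 {nA nB : Type*} [Fintype nA] [Fintype nB] [DecidableEq nA] [DecidableEq nB]
    (ρ : Matrix (nA × nB) (nA × nB) ℂ) (hρ : ρ.PosSemidef) (htr : ρ.trace = 1) :
    ¬ SepState ρ ↔
      ∃ H : Matrix (nA × nB) (nA × nB) ℂ, H.IsHermitian ∧ (H * ρ).trace < 0 ∧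
        ∀ σ : Matrix (nA × nB) (nA × nB) ℂ,
          σ.PosSemidef → σ.trace = 1 → SepState σ → 0 ≤ (H * σ).trace := by
  constructor
  · intro hsep
    have hnot : ρ ∉ convexHull ℝ (ProdStates nA nB) := fun h =>
      hsep (sepState_iff_mem_convexHull.mpr h)
    obtain ⟨f, u, hfρ, hfS⟩ := geometric_hahn_banach_point_closed
      (convex_convexHull ℝ _)
      (isCompact_convexHull_of_isCompact' isCompact_prodStates).isClosed hnot
    obtain ⟨B, hB⟩ := exists_repr_matrix f
    set H₀ : Matrix (nA × nB) (nA × nB) ℂ := ((2 : ℂ)⁻¹) • (B + Bᴴ) with hH₀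
    have htrace : ∀ σ : Matrix (nA × nB) (nA × nB) ℂ, σ.IsHermitian →
        (H₀ * σ).trace = ((f σ : ℝ) : ℂ) := by
      intro σ hσ
      have h1 : (Bᴴ * σ).trace = star ((B * σ).trace) := by
        rw [← Matrix.trace_conjTranspose, Matrix.conjTranspose_mul, hσ.eq,
          Matrix.trace_mul_comm]
      rw [hH₀, Matrix.smul_mul, Matrix.trace_smul, Matrix.add_mul, Matrix.trace_add, h1]
      erw [← hB σ]
      rw [Complex.star_def, Complex.add_conj]
      rw [smul_eq_mul]
      push_cast
      ring
    set H : Matrix (nA × nB) (nA × nB) ℂ := H₀ - (u : ℂ) • 1 with hH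
    have htrH : ∀ σ : Matrix (nA × nB) (nA × nB) ℂ, σ.IsHermitian → σ.trace = 1 →
        (H * σ).trace = ((f σ - u : ℝ) : ℂ) := by
      intro σ hσ h1
      rw [hH, Matrix.sub_mul, Matrix.trace_sub, htrace σ hσ, Matrix.smul_mul, Matrix.one_mul,
        Matrix.trace_smul, h1, smul_eq_mul, mul_one]
      push_cast
      ring
    have hH₀herm : H₀.IsHermitian := by
      rw [hH₀]
      unfold Matrix.IsHermitian
      rw [Matrix.conjTranspose_smul, Matrix.conjTranspose_add,
        Matrix.conjTranspose_conjTranspose]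
      rw [show star ((2 : ℂ)⁻¹) = (2 : ℂ)⁻¹ by norm_num]
      rw [add_comm]
    have hHherm : H.IsHermitian := by
      rw [hH]
      refine hH₀herm.sub ?_
      unfold Matrix.IsHermitian
      rw [Matrix.conjTranspose_smul, Matrix.conjTranspose_one, Complex.star_def,
        Complex.conj_ofReal]
    refine ⟨H, hHherm, ?_, ?_⟩
    · rw [htrH ρ hρ.1 htr, show (0 : ℂ) = ((0 : ℝ) : ℂ) by norm_num, Complex.real_lt_real]
      linarith
    · intro σ hpsd hst hsepσ
      rw [htrH σ hpsd.1 hst, show (0 : ℂ) = ((0 : ℝ) : ℂ) by norm_num, Complex.real_le_real]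
      have := hfS σ (sepState_iff_mem_convexHull.mp hsepσ)
      linarith
  · rintro ⟨H, hH, hneg, hpos⟩ hsep
    exact absurd (hpos ρ hρ htr hsep) (not_le_of_gt (show (H * ρ).trace < 0 from hneg))
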